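/- Let θ : M_{2n}(ℂ) → M_{2n}(ℂ) be the map θ(X) = J Xᵀ J (note J = J^{−1}). Then the set 𝔨 = {X ∈ sp_{2n} : θ(X) = −X} is a Lie subalgebra of sp_{2n}, and 𝔨 equals the ℂ-linear span of the matrices G_{ij} = ε_i F_{ij} − ε_j F_{ji}, 1 ≤ i,j ≤ 2n. -/

import Mathlib

/-!
Put `σ(X) = Ω Xᵀ Ω` and `θ(X) = J Xᵀ J`. Since `Ω⁻¹ = -Ω`, the set `𝔨` is the joint eigenspace
`σ = 1, θ = -1`; equivalently, it consists of the matrices that are skew-adjoint for both of the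
forms `Ω⁻¹` and `J`, an intersection of two Lie subalgebras.
As `Ωᵀ Ω = Jᵀ J = 1` and `ΩJ = -JΩ`, the maps `σ, θ` are commuting involutions, so
`(1 + σ)(1 - θ)` maps onto `𝔨` and acts on `𝔨` as multiplication by `4`. It sends `e_{ij}` to
`ε_i G_{ij}`, hence the `G_{ij}` span `𝔨`.
-/

noncomputable section

set_option synthInstance.maxHeartbeats 1000000
set_option maxHeartbeats 1000000

namespace CI

open Matrix

def pr (n : ℕ) (i : Fin (2*n)) : Fin (2*n) := ⟨2*n - 1 - i.val, by have := i.isLt; omega⟩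

def eps (n : ℕ) (i : Fin (2*n)) : ℂ := if (i : ℕ) < n then 1 else -1

def E (n : ℕ) (i j : Fin (2*n)) : Matrix (Fin (2*n)) (Fin (2*n)) ℂ :=
  Matrix.single i j 1

/-- F_{ij} = e_{ij} − ε_i ε_j e_{j′ i′}. -/
def Fm (n : ℕ) (i j : Fin (2*n)) : Matrix (Fin (2*n)) (Fin (2*n)) ℂ :=
  E n i j - (eps n i * eps n j) • E n (pr n j) (pr n i)

/-- G_{ij} = ε_i F_{ij} − ε_j F_{ji}. -/
def Gm (n : ℕ) (i j : Fin (2*n)) : Matrix (Fin (2*n)) (Fin (2*n)) ℂ :=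
  eps n i • Fm n i j - eps n j • Fm n j i

/-- Ω = Σ_k ε_k e_{k k′}. -/
def Om (n : ℕ) : Matrix (Fin (2*n)) (Fin (2*n)) ℂ :=
  ∑ k, eps n k • E n k (pr n k)

/-- J = Σ_k ε_k e_{kk}. -/
def Jm (n : ℕ) : Matrix (Fin (2*n)) (Fin (2*n)) ℂ :=
  Matrix.diagonal (eps n)

/-- The symplectic Lie algebra sp_{2n} = { X : Ω Xᵀ Ω⁻¹ = −X }, as a set of matrices. -/
def sp (n : ℕ) : Set (Matrix (Fin (2*n)) (Fin (2*n)) ℂ) :=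
  {X | Om n * Xᵀ * (Om n)⁻¹ = -X}

/-- The −1 eigenspace 𝔨 = { X ∈ sp_{2n} : θ(X) = −X } of the involution θ(X) = J Xᵀ J. -/
def kSet (n : ℕ) : Set (Matrix (Fin (2*n)) (Fin (2*n)) ℂ) :=
  {X | X ∈ sp n ∧ Jm n * Xᵀ * Jm n = -X}

end CI

section TwistedTranspose

open Matrix

variable {m R : Type*} [Fintype m] [CommRing R]

theorem Matrix.mul_transpose_mul_inv_eq_neg_iff [DecidableEq m] {A X : Matrix m m R}
    (hA : IsUnit A.det) : A * Xᵀ * A⁻¹ = -X ↔ A⁻¹.IsSkewAdjoint X := by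
  rw [Matrix.IsSkewAdjoint, Matrix.IsAdjointPair]
  constructor
  · intro h
    rw [← h, ← Matrix.mul_assoc, ← Matrix.mul_assoc, nonsing_inv_mul _ hA, Matrix.one_mul]
  · intro h
    rw [Matrix.mul_assoc, h, ← Matrix.mul_assoc, mul_nonsing_inv _ hA, Matrix.one_mul]

def Matrix.twistedTranspose (A : Matrix m m R) : Module.End R (Matrix m m R) where
  toFun X := A * Xᵀ * A
  map_add' X Y := by simp only [transpose_add, Matrix.mul_add, Matrix.add_mul]
  map_smul' c X := by simp only [transpose_smul, Matrix.mul_smul, Matrix.smul_mul, RingHom.id_apply]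

@[simp]
theorem Matrix.twistedTranspose_apply (A X : Matrix m m R) : twistedTranspose A X = A * Xᵀ * A :=
  rfl

theorem Matrix.twistedTranspose_mul_self [DecidableEq m] {A : Matrix m m R} (hA : Aᵀ * A = 1) :
    twistedTranspose A * twistedTranspose A = 1 := by
  have hA' : A * Aᵀ = 1 := mul_eq_one_comm.mp hA
  ext1 X
  simp only [Module.End.mul_apply, twistedTranspose_apply, transpose_mul, transpose_transpose,
    Module.End.one_apply, Matrix.mul_assoc, hA, Matrix.mul_one]
  rw [← Matrix.mul_assoc, hA', Matrix.one_mul]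

theorem Matrix.commute_twistedTranspose {A B : Matrix m m R} (h₁ : A * Bᵀ = B * Aᵀ)
    (h₂ : Bᵀ * A = Aᵀ * B) : Commute (twistedTranspose A) (twistedTranspose B) := by
  ext1 X
  simp only [Module.End.mul_apply, twistedTranspose_apply, transpose_mul, transpose_transpose,
    ← Matrix.mul_assoc, h₁]
  simp only [Matrix.mul_assoc, h₂]

end TwistedTranspose

theorem Module.End.range_one_add_mul_one_sub {K V : Type*} [Field K] [NeZero (2 : K)]
    [AddCommGroup V] [Module K V] {σ θ : Module.End K V} (hσ : σ * σ = 1) (hθ : θ * θ = 1)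
    (hσθ : Commute σ θ) :
    LinearMap.range ((1 + σ) * (1 - θ)) = σ.eigenspace 1 ⊓ θ.eigenspace (-1) := by
  have hσP : σ * ((1 + σ) * (1 - θ)) = (1 + σ) * (1 - θ) := by
    rw [← mul_assoc, mul_add, hσ, mul_one, add_comm]
  have hθP : θ * ((1 + σ) * (1 - θ)) = -((1 + σ) * (1 - θ)) := by
    rw [← mul_assoc, ((Commute.one_right θ).add_right hσθ.symm).eq, mul_assoc, mul_sub, hθ,
      mul_one, ← neg_sub, mul_neg]
  ext v
  simp only [Submodule.mem_inf, mem_eigenspace_iff, LinearMap.mem_range, one_smul, neg_one_smul]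
  constructor
  · rintro ⟨w, rfl⟩
    exact ⟨congr($hσP w), congr($hθP w)⟩
  · rintro ⟨hσv, hθv⟩
    have h4 : (4 : K) ≠ 0 := by
      rw [show (4 : K) = 2 * 2 by norm_num]; exact mul_ne_zero two_ne_zero two_ne_zero
    have hPv : ((1 + σ) * (1 - θ)) v = (4 : K) • v := by
      simp only [Module.End.mul_apply, LinearMap.sub_apply, LinearMap.add_apply,
        Module.End.one_apply, hθv, map_sub, map_neg, hσv]
      module
    exact ⟨(4 : K)⁻¹ • v, by rw [map_smul, hPv, smul_smul, inv_mul_cancel₀ h4, one_smul]⟩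

namespace CI

open Matrix

theorem pr_pr (n : ℕ) (i : Fin (2*n)) : pr n (pr n i) = i := by
  ext
  simp only [pr]
  omega

theorem pr_eq_iff {n : ℕ} {i j : Fin (2*n)} : pr n i = j ↔ i = pr n j := by
  constructor <;> rintro rfl <;> rw [pr_pr]

theorem eps_pr (n : ℕ) (i : Fin (2*n)) : eps n (pr n i) = -eps n i := by
  have := i.isLt
  by_cases h : i.val < n
  · have h' : ¬(pr n i).val < n := by simp only [pr]; omega
    simp only [eps, h, h', if_true, if_false]
  · have h' : (pr n i).val < n := by simp only [pr]; omega
    simp only [eps, h, h', if_true, if_false, neg_neg]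

theorem eps_mul_self (n : ℕ) (i : Fin (2*n)) : eps n i * eps n i = 1 := by
  simp only [eps]; split_ifs <;> norm_num

theorem Om_apply (n : ℕ) (i j : Fin (2*n)) :
    Om n i j = if j = pr n i then eps n i else 0 := by
  simp only [Om, E, Matrix.sum_apply, Matrix.smul_apply, single_apply, smul_eq_mul]
  rw [Finset.sum_eq_single i] <;> aesop

theorem Om_mul_apply (n : ℕ) (A : Matrix (Fin (2*n)) (Fin (2*n)) ℂ) (i j : Fin (2*n)) :
    (Om n * A) i j = eps n i * A (pr n i) j := by
  rw [mul_apply, Finset.sum_eq_single (pr n i)]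
  · rw [Om_apply, if_pos rfl]
  · intro k _ hk
    rw [Om_apply, if_neg hk, zero_mul]
  · simp

theorem mul_Om_apply (n : ℕ) (A : Matrix (Fin (2*n)) (Fin (2*n)) ℂ) (i j : Fin (2*n)) :
    (A * Om n) i j = -(A i (pr n j) * eps n j) := by
  rw [mul_apply, Finset.sum_eq_single (pr n j)]
  · rw [Om_apply, pr_pr, if_pos rfl, eps_pr, mul_neg]
  · intro k _ hk
    rw [Om_apply, if_neg (fun h => hk (by rw [h, pr_pr])), mul_zero]
  · simp

theorem Om_transpose (n : ℕ) : (Om n)ᵀ = -Om n := by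
  ext i j
  simp only [transpose_apply, Matrix.neg_apply, Om_apply]
  by_cases h : j = pr n i
  · simp [h, pr_pr, eps_pr]
  · have h' : i ≠ pr n j := fun h' => h (by rw [h', pr_pr])
    simp [h, h']

theorem Om_mul_Om (n : ℕ) : Om n * Om n = -1 := by
  ext i j
  rw [Om_mul_apply, Om_apply, pr_pr, eps_pr, Matrix.neg_apply, one_apply]
  by_cases h : i = j
  · simp [h, eps_mul_self]
  · simp [h, Ne.symm h]

theorem Jm_mul_Om (n : ℕ) : Jm n * Om n = -(Om n * Jm n) := by
  ext i j
  rw [Jm, Matrix.neg_apply, diagonal_mul, mul_diagonal, Om_apply]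
  split_ifs with h
  · rw [h, eps_pr]; ring
  · simp

theorem Jm_transpose (n : ℕ) : (Jm n)ᵀ = Jm n :=
  diagonal_transpose _

theorem Jm_mul_Jm (n : ℕ) : Jm n * Jm n = 1 := by
  rw [Jm, diagonal_mul_diagonal, ← diagonal_one]
  exact congrArg diagonal (funext (eps_mul_self n))

theorem Om_inv (n : ℕ) : (Om n)⁻¹ = -Om n :=
  inv_eq_right_inv (by rw [Matrix.mul_neg, Om_mul_Om, neg_neg])

theorem Jm_inv (n : ℕ) : (Jm n)⁻¹ = Jm n :=
  inv_eq_right_inv (Jm_mul_Jm n)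

theorem isUnit_det_Om (n : ℕ) : IsUnit (Om n).det :=
  isUnit_det_of_right_inverse (by rw [Matrix.mul_neg, Om_mul_Om, neg_neg])

theorem isUnit_det_Jm (n : ℕ) : IsUnit (Jm n).det :=
  isUnit_det_of_right_inverse (Jm_mul_Jm n)

attribute [local instance] LieRing.ofAssociativeRing

def kLie (n : ℕ) : LieSubalgebra ℂ (Matrix (Fin (2*n)) (Fin (2*n)) ℂ) :=
  skewAdjointMatricesLieSubalgebra (Om n)⁻¹ ⊓ skewAdjointMatricesLieSubalgebra (Jm n)

theorem coe_kLie (n : ℕ) : (kLie n : Set (Matrix (Fin (2*n)) (Fin (2*n)) ℂ)) = kSet n := by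
  ext X
  have hJ := mul_transpose_mul_inv_eq_neg_iff (X := X) (isUnit_det_Jm n)
  rw [Jm_inv] at hJ
  simp only [kLie, kSet, sp, SetLike.mem_coe, LieSubalgebra.mem_inf,
    mem_skewAdjointMatricesLieSubalgebra, mem_skewAdjointMatricesSubmodule, Set.mem_ofPred_eq,
    mul_transpose_mul_inv_eq_neg_iff (isUnit_det_Om n), hJ]

theorem kSet_eq_eigenspace (n : ℕ) : kSet n =
    ↑((twistedTranspose (Om n)).eigenspace 1 ⊓ (twistedTranspose (Jm n)).eigenspace (-1)) := by
  ext X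
  simp only [kSet, sp, Om_inv, Set.mem_ofPred_eq, SetLike.mem_coe, Submodule.mem_inf,
    Module.End.mem_eigenspace_iff, twistedTranspose_apply, one_smul, neg_one_smul,
    Matrix.mul_neg, neg_inj]

theorem twistedTranspose_Om_E (n : ℕ) (i j : Fin (2*n)) :
    twistedTranspose (Om n) (E n i j) = -(eps n i * eps n j) • E n (pr n j) (pr n i) := by
  ext a b
  simp only [twistedTranspose_apply, mul_Om_apply, Om_mul_apply, E, transpose_apply,
    Matrix.smul_apply, single_apply, smul_eq_mul]
  by_cases h : i = pr n b ∧ j = pr n a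
  · obtain ⟨rfl, rfl⟩ := h
    simp only [pr_pr, eps_pr, and_self, if_true]
    ring
  · have h' : ¬(pr n j = a ∧ pr n i = b) := by rwa [pr_eq_iff, pr_eq_iff, and_comm]
    simp [h, h']

theorem twistedTranspose_Jm_E (n : ℕ) (i j : Fin (2*n)) :
    twistedTranspose (Jm n) (E n i j) = (eps n i * eps n j) • E n j i := by
  ext a b
  simp only [twistedTranspose_apply, Jm, diagonal_mul, mul_diagonal, E, transpose_apply,
    Matrix.smul_apply, single_apply, smul_eq_mul]
  by_cases h : j = a ∧ i = b
  · obtain ⟨rfl, rfl⟩ := h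
    simp only [and_self, if_true]
    ring
  · have h' : ¬(i = b ∧ j = a) := by rwa [and_comm]
    simp [h, h']

theorem one_add_twistedTranspose_Om_E (n : ℕ) (i j : Fin (2*n)) :
    (1 + twistedTranspose (Om n)) (E n i j) = Fm n i j := by
  rw [LinearMap.add_apply, Module.End.one_apply, twistedTranspose_Om_E, Fm, neg_smul,
    ← sub_eq_add_neg]

theorem one_add_mul_one_sub_twistedTranspose_E (n : ℕ) (i j : Fin (2*n)) :
    ((1 + twistedTranspose (Om n)) * (1 - twistedTranspose (Jm n))) (E n i j) =
      eps n i • Gm n i j := by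
  rw [Module.End.mul_apply, LinearMap.sub_apply, Module.End.one_apply, twistedTranspose_Jm_E,
    map_sub, map_smul, one_add_twistedTranspose_Om_E, one_add_twistedTranspose_Om_E, Gm,
    smul_sub, smul_smul, smul_smul, eps_mul_self, one_smul]

theorem span_Gm_eq_range (n : ℕ) :
    Submodule.span ℂ (Set.range fun p : Fin (2*n) × Fin (2*n) => Gm n p.1 p.2) =
      LinearMap.range ((1 + twistedTranspose (Om n)) * (1 - twistedTranspose (Jm n))) := by
  apply le_antisymm
  · rw [Submodule.span_le]
    rintro _ ⟨⟨i, j⟩, rfl⟩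
    refine ⟨eps n i • E n i j, ?_⟩
    rw [map_smul, one_add_mul_one_sub_twistedTranspose_E, smul_smul, eps_mul_self, one_smul]
  · rintro _ ⟨X, rfl⟩
    rw [matrix_eq_sum_single X]
    simp only [map_sum]
    refine Submodule.sum_mem _ fun i _ => Submodule.sum_mem _ fun j _ => ?_
    have hsingle : single i j (X i j) = X i j • E n i j := by
      rw [E, smul_single, smul_eq_mul, mul_one]
    rw [hsingle, map_smul, one_add_mul_one_sub_twistedTranspose_E, smul_smul]
    exact Submodule.smul_mem _ _ (Submodule.subset_span ⟨(i, j), rfl⟩)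

theorem kSet_lie_subalgebra_and_span_general (n : ℕ) :
    (∀ X ∈ kSet n, ∀ Y ∈ kSet n, X * Y - Y * X ∈ kSet n) ∧
    (↑(Submodule.span ℂ (Set.range fun p : Fin (2*n) × Fin (2*n) => Gm n p.1 p.2))
      = kSet n) := by
  refine ⟨fun X hX Y hY => ?_, ?_⟩
  · rw [← coe_kLie] at hX hY ⊢
    exact (kLie n).lie_mem hX hY
  · have hOm : (Om n)ᵀ * Om n = 1 := by rw [Om_transpose, Matrix.neg_mul, Om_mul_Om, neg_neg]
    have hJm : (Jm n)ᵀ * Jm n = 1 := by rw [Jm_transpose, Jm_mul_Jm]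
    have hcomm : Commute (twistedTranspose (Om n)) (twistedTranspose (Jm n)) :=
      commute_twistedTranspose
        (by rw [Jm_transpose, Om_transpose, Matrix.mul_neg, Jm_mul_Om, neg_neg])
        (by rw [Jm_transpose, Om_transpose, Matrix.neg_mul, Jm_mul_Om])
    rw [span_Gm_eq_range, Module.End.range_one_add_mul_one_sub (twistedTranspose_mul_self hOm)
      (twistedTranspose_mul_self hJm) hcomm, kSet_eq_eigenspace]

/-- 𝔨 is a Lie subalgebra of sp_{2n}, and it equals the ℂ-linear span
    of the matrices G_{ij}. -/
theorem kSet_lie_subalgebra_and_span (n : ℕ) (hn : 2 ≤ n) :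
    (∀ X ∈ kSet n, ∀ Y ∈ kSet n, X * Y - Y * X ∈ kSet n) ∧
    (↑(Submodule.span ℂ (Set.range fun p : Fin (2*n) × Fin (2*n) => Gm n p.1 p.2))
      = kSet n) :=
  kSet_lie_subalgebra_and_span_general n

end CI
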